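/- arXiv:2502.05705 — 3 statements merged into one kernel-verified Lean document; each statement's English description precedes it below -/
import Mathlib

section
/- Define the distributions E_even, E_odd : ℕ → ℝ by E_even(s) = c·∏_{k=1}^{s/2} 3/(3^k−1) for even s and 0 for odd s, where c = ∏_{k=0}^∞ 1/(1+3^{-k}); and E_odd(s) = c·∏_{k=1}^{(s−1)/2} 3/(3^k−1) for odd s, 0 for even s. Then ∑_{s=0}^∞ E_even(s) = 1 and ∑_{s=0}^∞ E_odd(s) = 1. -/
/-!
Put `q = 1/3`. Since `3 / (3 ^ k - 1) = q ^ (k - 1) / (1 - q ^ k)`, the summands are Euler's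
coefficients `aₙ = q ^ (n(n-1)/2) / ((1 - q) ⋯ (1 - q ^ n))`, and `aₙ₊₁ (1 - q ^ (n + 1)) = aₙ qⁿ`
turns into the functional equation `F z = (1 + z) F (q z)` for `F z = ∑ aₙ zⁿ`. Iterating,
`F 1 = (∏_{k<m} (1 + q ^ k)) F (q ^ m)`, and `F (q ^ m) → F 0 = 1`, so `∑ aₙ = ∏ (1 + q ^ k) = c⁻¹`.
Both distributions are the weights `c aⱼ`, placed at `2j` and at `2j + 1` respectively.
-/

open scoped BigOperators

/-- The constant c = ∏_{k=0}^∞ (1 + 3^{-k})⁻¹. -/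
noncomputable def cConst : ℝ := ∏' k : ℕ, (1 + ((3 : ℝ) ^ k)⁻¹)⁻¹

/-- The even stationary distribution: E_even(s) = c · ∏_{k=1}^{s/2} 3/(3^k - 1) for
even s, and 0 for odd s. -/
noncomputable def Eeven (s : ℕ) : ℝ :=
  if Even s then cConst * ∏ k ∈ Finset.Icc 1 (s / 2), 3 / ((3 : ℝ) ^ k - 1) else 0

/-- The odd stationary distribution: E_odd(s) = c · ∏_{k=1}^{(s-1)/2} 3/(3^k - 1) for
odd s, and 0 for even s. -/
noncomputable def Eodd (s : ℕ) : ℝ :=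
  if Odd s then cConst * ∏ k ∈ Finset.Icc 1 ((s - 1) / 2), 3 / ((3 : ℝ) ^ k - 1) else 0

open Filter Finset Topology

section EulerIdentity

variable {q z : ℝ}

/-- `q ^ (n(n-1)/2) / ((1 - q) ⋯ (1 - q ^ n))`, the coefficient of `z ^ n` in Euler's expansion
of `∏ k, (1 + z q ^ k)`. -/
noncomputable def eulerCoeff (q : ℝ) (n : ℕ) : ℝ :=
  ∏ k ∈ range n, q ^ k / (1 - q ^ (k + 1))

noncomputable def eulerSeries (q z : ℝ) : ℝ :=
  ∑' n, eulerCoeff q n * z ^ n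

@[simp]
lemma eulerCoeff_zero : eulerCoeff q 0 = 1 := prod_range_zero _

lemma eulerCoeff_succ (n : ℕ) :
    eulerCoeff q (n + 1) = eulerCoeff q n * (q ^ n / (1 - q ^ (n + 1))) :=
  prod_range_succ _ _

lemma one_sub_pow_succ_ne_zero (hq : |q| < 1) (n : ℕ) : 1 - q ^ (n + 1) ≠ 0 := by
  have : |q ^ (n + 1)| < 1 := by
    rw [abs_pow]; exact pow_lt_one₀ (abs_nonneg q) hq n.succ_ne_zero
  exact sub_ne_zero.2 fun h => by simp [← h] at this

lemma eulerCoeff_ne_zero (hq0 : q ≠ 0) (hq : |q| < 1) (n : ℕ) : eulerCoeff q n ≠ 0 :=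
  prod_ne_zero_iff.2 fun k _ => div_ne_zero (pow_ne_zero k hq0) (one_sub_pow_succ_ne_zero hq k)

lemma eulerCoeff_succ_eq_add (hq : |q| < 1) (n : ℕ) :
    eulerCoeff q (n + 1) = eulerCoeff q n * q ^ n + q ^ (n + 1) * eulerCoeff q (n + 1) := by
  have := one_sub_pow_succ_ne_zero hq n
  rw [eulerCoeff_succ]
  field_simp
  ring

lemma summable_abs_eulerCoeff (hq0 : q ≠ 0) (hq : |q| < 1) :
    Summable fun n => |eulerCoeff q n| := by
  have hratio : Tendsto (fun n => ‖eulerCoeff q (n + 1)‖ / ‖eulerCoeff q n‖) atTop (𝓝 0) := by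
    have hpow := tendsto_pow_atTop_nhds_zero_of_abs_lt_one hq
    have hlim := (hpow.div ((hpow.comp (tendsto_add_atTop_nat 1)).const_sub 1) (by simp)).norm
    simp only [sub_zero, div_one, norm_zero] at hlim
    refine hlim.congr fun n => ?_
    rw [eulerCoeff_succ, norm_mul, mul_div_cancel_left₀ _ (norm_ne_zero_iff.2
      (eulerCoeff_ne_zero hq0 hq n))]
    rfl
  exact (summable_of_ratio_test_tendsto_lt_one zero_lt_one
    (Eventually.of_forall (eulerCoeff_ne_zero hq0 hq)) hratio).abs

lemma abs_mul_pow_le_one (hq : |q| ≤ 1) (hz : |z| ≤ 1) (m : ℕ) : |z * q ^ m| ≤ 1 := by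
  rw [abs_mul, abs_pow]
  exact mul_le_one₀ hz (by positivity) (pow_le_one₀ (abs_nonneg q) hq)

lemma abs_eulerCoeff_mul_pow_le (hz : |z| ≤ 1) (n : ℕ) :
    |eulerCoeff q n * z ^ n| ≤ |eulerCoeff q n| := by
  rw [abs_mul, abs_pow]
  exact mul_le_of_le_one_right (abs_nonneg _) (pow_le_one₀ (abs_nonneg z) hz)

lemma summable_eulerCoeff_mul_pow (hq0 : q ≠ 0) (hq : |q| < 1) (hz : |z| ≤ 1) :
    Summable fun n => eulerCoeff q n * z ^ n :=
  (summable_abs_eulerCoeff hq0 hq).of_norm_bounded (abs_eulerCoeff_mul_pow_le hz)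

lemma eulerSeries_eq_one_add_mul (hq0 : q ≠ 0) (hq : |q| < 1) (hz : |z| ≤ 1) :
    eulerSeries q z = (1 + z) * eulerSeries q (z * q) := by
  have hzq : |z * q| ≤ 1 := by simpa using abs_mul_pow_le_one hq.le hz 1
  set g : ℕ → ℝ := fun n => eulerCoeff q n * (z * q) ^ n
  have hg : HasSum g (eulerSeries q (z * q)) := (summable_eulerCoeff_mul_pow hq0 hq hzq).hasSum
  have hshift : HasSum (fun n => z * g n + g (n + 1)) (z * eulerSeries q (z * q) +
      (eulerSeries q (z * q) - 1)) :=
    (hg.mul_left z).add (by simpa [g] using (hasSum_nat_add_iff' 1).2 hg)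
  have hterm : (fun n => eulerCoeff q (n + 1) * z ^ (n + 1)) = fun n => z * g n + g (n + 1) := by
    ext n
    simp only [g]
    linear_combination z ^ (n + 1) * eulerCoeff_succ_eq_add hq n
  have hval : (1 + z) * eulerSeries q (z * q) - ∑ i ∈ range 1, eulerCoeff q i * z ^ i =
      z * eulerSeries q (z * q) + (eulerSeries q (z * q) - 1) := by
    simp only [range_one, sum_singleton, eulerCoeff_zero, pow_zero, mul_one]
    ring
  have hf : HasSum (fun n => eulerCoeff q n * z ^ n) ((1 + z) * eulerSeries q (z * q)) :=
    (hasSum_nat_add_iff' 1).1 (by rw [hterm, hval]; exact hshift)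
  exact hf.tsum_eq

lemma eulerSeries_eq_prod_mul (hq0 : q ≠ 0) (hq : |q| < 1) (hz : |z| ≤ 1) (m : ℕ) :
    eulerSeries q z = (∏ k ∈ range m, (1 + z * q ^ k)) * eulerSeries q (z * q ^ m) := by
  induction m with
  | zero => simp
  | succ m ih =>
    rw [ih, eulerSeries_eq_one_add_mul hq0 hq (abs_mul_pow_le_one hq.le hz m), prod_range_succ,
      pow_succ, mul_assoc z]
    ring

lemma tendsto_eulerSeries_mul_pow (hq0 : q ≠ 0) (hq : |q| < 1) (hz : |z| ≤ 1) :
    Tendsto (fun m => eulerSeries q (z * q ^ m)) atTop (𝓝 1) := by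
  have hzq : Tendsto (fun m => z * q ^ m) atTop (𝓝 0) := by
    simpa using (tendsto_pow_atTop_nhds_zero_of_abs_lt_one hq).const_mul z
  have hlim := tendsto_tsum_of_dominated_convergence (summable_abs_eulerCoeff hq0 hq)
    (f := fun m n => eulerCoeff q n * (z * q ^ m) ^ n) (g := fun n => eulerCoeff q n * 0 ^ n)
    (fun n => ((hzq.pow n).const_mul _)) ?_
  · have h0 : ∑' n, eulerCoeff q n * (0 : ℝ) ^ n = 1 := by
      rw [tsum_eq_single 0 fun n hn => by simp [hn]]
      simp
    rwa [h0] at hlim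
  · exact Eventually.of_forall fun m =>
      abs_eulerCoeff_mul_pow_le (abs_mul_pow_le_one hq.le hz m)

theorem hasSum_eulerCoeff_mul_pow (hq0 : q ≠ 0) (hq : |q| < 1) (hz : |z| ≤ 1) :
    HasSum (fun n => eulerCoeff q n * z ^ n) (∏' k, (1 + z * q ^ k)) := by
  have hprod : Multipliable fun k => 1 + z * q ^ k := by
    refine multipliable_one_add_of_summable ?_
    simpa [abs_mul, abs_pow] using
      (summable_geometric_of_lt_one (abs_nonneg q) hq).mul_left |z|
  have hlim := hprod.hasProd.tendsto_prod_nat.mul (tendsto_eulerSeries_mul_pow hq0 hq hz)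
  rw [mul_one] at hlim
  have hconst := tendsto_nhds_unique
    (tendsto_const_nhds.congr (eulerSeries_eq_prod_mul hq0 hq hz)) hlim
  rw [← hconst]
  exact (summable_eulerCoeff_mul_pow hq0 hq hz).hasSum

end EulerIdentity

lemma eulerCoeff_inv_three (n : ℕ) :
    eulerCoeff 3⁻¹ n = ∏ k ∈ Icc 1 n, 3 / ((3 : ℝ) ^ k - 1) := by
  induction n with
  | zero => simp
  | succ n ih =>
    have h3 : (3 : ℝ) ^ (n + 1) - 1 ≠ 0 := by
      have : (1 : ℝ) < 3 ^ (n + 1) := one_lt_pow₀ (by norm_num) n.succ_ne_zero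
      linarith
    rw [eulerCoeff_succ, ih, prod_Icc_succ_top (by omega), inv_pow, inv_pow]
    congr 1
    field_simp
    ring

lemma cConst_mul_tprod_one_add_inv_three_pow :
    cConst * ∏' k : ℕ, (1 + (3 : ℝ)⁻¹ ^ k) = 1 := by
  have hsum : Summable fun k : ℕ => ‖(3 : ℝ)⁻¹ ^ k‖ := by
    simpa using summable_geometric_of_lt_one (by norm_num : (0 : ℝ) ≤ 3⁻¹) (by norm_num)
  have hne := tprod_one_add_ne_zero_of_summable (fun k => by positivity) hsum
  rw [cConst]
  simp_rw [← inv_pow]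
  rw [(multipliable_one_add_of_summable hsum).tprod_inv₀ hne, inv_mul_cancel₀ hne]

/-- Both E_even and E_odd are probability distributions: their total mass is 1. -/
theorem Eeven_Eodd_sum_one :
    (∑' s : ℕ, Eeven s) = 1 ∧ (∑' s : ℕ, Eodd s) = 1 := by
  have hsum := (hasSum_eulerCoeff_mul_pow (q := 3⁻¹) (z := 1) (by norm_num)
    (by norm_num [abs_of_pos]) (by norm_num)).mul_left cConst
  simp only [one_pow, mul_one, one_mul, eulerCoeff_inv_three,
    cConst_mul_tprod_one_add_inv_three_pow] at hsum
  have heven : HasSum Eeven (1 + 0) :=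
    .even_add_odd (by simpa [Eeven] using hsum) (by simp [Eeven])
  have hodd : HasSum Eodd (0 + 1) :=
    .even_add_odd (by simp [Eodd, Nat.not_odd_iff_even.2 (even_two_mul _)])
      (by simpa [Eodd] using hsum)
  exact ⟨by simpa using heven.tsum_eq, by simpa using hodd.tsum_eq⟩
end

section
/- For every even integer s ≥ 4, the tail sum of the even stationary distribution satisfies ∑_{s'≥s, s' even} E_even(s') < C · 3^{−s(s−2)/8}, where C = ∏_{k=1}^∞ 1/(1−3^{-k}) and E_even(s') = (∏_{k=0}^∞ 1/(1+3^{-k})) · ∏_{k=1}^{s'/2} 3/(3^k−1). -/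
open scoped BigOperators

/-- The constant C = ∏_{k=1}^∞ (1 - 3^{-k})⁻¹. -/
noncomputable def CConst : ℝ := ∏' k : ℕ, (1 - ((3 : ℝ) ^ (k + 1))⁻¹)⁻¹

/-!
Writing `3 / (3 ^ k - 1) = 3 ^ (-(k - 1)) (1 - 3 ^ (-k))⁻¹` gives
`E_even (2m) = c 3 ^ (-(m choose 2)) ∏_{k ≤ m} (1 - 3 ^ (-k))⁻¹ ≤ c C 3 ^ (-(m choose 2))`,
the partial products increasing to `C`. For `s = 2j` with `j ≥ 2` we have
`s (s - 2) / 8 = j choose 2` and `(j + i) choose 2 ≥ j choose 2 + 2i`, so the tail is at most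
`c C 3 ^ (-(j choose 2))` times a geometric series of sum `3 / 2`. Finally `c` is at most its first
factor `1 / 2`, so `3c / 2 < 1`.
-/

open Finset Filter

namespace Real

variable {ι : Type*} {f : ι → ℝ}

lemma multipliable_inv_one_add_of_summable (hf : Summable f) (hpos : ∀ i, 0 < 1 + f i) :
    Multipliable fun i ↦ (1 + f i)⁻¹ :=
  multipliable_of_summable_log (fun i ↦ inv_pos.2 (hpos i)) <| by
    simpa only [log_inv] using (summable_log_one_add_of_summable hf).neg

lemma prod_le_tprod_of_one_le (hf : Multipliable f) (h : ∀ i, 1 ≤ f i) (s : Finset ι) :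
    ∏ i ∈ s, f i ≤ ∏' i, f i :=
  ge_of_tendsto hf.hasProd <| eventually_atTop.2 ⟨s, fun _ hst ↦ prod_mono_set_of_one_le h hst⟩

lemma tprod_le_prod_of_le_one (hf : Multipliable f) (h₀ : ∀ i, 0 ≤ f i) (h : ∀ i, f i ≤ 1)
    (s : Finset ι) : ∏' i, f i ≤ ∏ i ∈ s, f i :=
  le_of_tendsto hf.hasProd <| eventually_atTop.2 ⟨s, fun _ hst ↦ prod_anti_set_of_le_one h₀ h hst⟩

end Real

lemma prod_Icc_one_eq_prod_range {M : Type*} [CommMonoid M] (f : ℕ → M) (m : ℕ) :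
    ∏ k ∈ Icc 1 m, f k = ∏ k ∈ range m, f (k + 1) := by
  rw [range_eq_Ico, prod_Ico_add' f 0 m 1, zero_add, Ico_add_one_right_eq_Icc]

lemma tsum_ite_le_eq_tsum_add {M : Type*} [AddCommMonoid M] [TopologicalSpace M] (f : ℕ → M)
    (s : ℕ) : ∑' n, (if s ≤ n then f n else 0) = ∑' n, f (n + s) := by
  have hsupp : Function.support (fun n ↦ if s ≤ n then f n else 0) ⊆ Set.range (· + s) :=
    fun n hn ↦ ⟨n - s, Nat.sub_add_cancel (by_contra fun h ↦ hn (if_neg h))⟩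
  rw [← (add_left_injective s).tsum_eq hsupp]
  simp

lemma Nat.choose_two_add_two_mul_le_add_choose_two (i : ℕ) {j : ℕ} (hj : 2 ≤ j) :
    j.choose 2 + 2 * i ≤ (i + j).choose 2 := by
  induction i with
  | zero => simp
  | succ i ih =>
    have h : (i + j + 1).choose 2 = (i + j).choose 2 + (i + j) := by
      simp [Nat.choose_succ_succ', add_comm]
    rw [show i + 1 + j = i + j + 1 by ring, h]
    omega

lemma two_mul_mul_two_mul_sub_two_div_eight (j : ℕ) : 2 * j * (2 * j - 2) / 8 = j.choose 2 := by
  rw [Nat.choose_two_right, show 2 * j - 2 = 2 * (j - 1) by omega,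
    show 2 * j * (2 * (j - 1)) = 4 * (j * (j - 1)) by ring, show 8 = 4 * 2 by rfl,
    Nat.mul_div_mul_left _ _ (by norm_num)]

lemma one_lt_three_pow_succ (k : ℕ) : (1 : ℝ) < 3 ^ (k + 1) :=
  one_lt_pow₀ (by norm_num) k.succ_ne_zero

lemma summable_inv_three_pow : Summable fun k : ℕ ↦ ((3 : ℝ) ^ k)⁻¹ := by
  simpa only [inv_pow] using summable_geometric_of_lt_one (r := (3 : ℝ)⁻¹) (by norm_num) (by norm_num)

lemma one_le_inv_one_sub_inv_three_pow_succ (k : ℕ) : 1 ≤ (1 - ((3 : ℝ) ^ (k + 1))⁻¹)⁻¹ :=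
  one_le_inv_iff₀.2
    ⟨sub_pos.2 (inv_lt_one_of_one_lt₀ (one_lt_three_pow_succ k)), sub_le_self _ (by positivity)⟩

lemma three_div_three_pow_succ_sub_one (k : ℕ) :
    3 / ((3 : ℝ) ^ (k + 1) - 1) = ((3 : ℝ) ^ k)⁻¹ * (1 - ((3 : ℝ) ^ (k + 1))⁻¹)⁻¹ := by
  rw [inv_eq_one_div (3 ^ (k + 1) : ℝ), one_sub_div (by positivity), inv_div, pow_succ]
  field_simp

lemma prod_Icc_three_div_three_pow_sub_one (m : ℕ) :
    ∏ k ∈ Icc 1 m, 3 / ((3 : ℝ) ^ k - 1) =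
      ((3 : ℝ) ^ m.choose 2)⁻¹ * ∏ k ∈ range m, (1 - ((3 : ℝ) ^ (k + 1))⁻¹)⁻¹ := by
  rw [prod_Icc_one_eq_prod_range, prod_congr rfl fun k _ ↦ three_div_three_pow_succ_sub_one k,
    prod_mul_distrib, prod_inv_distrib, prod_pow_eq_pow_sum, sum_range_id, ← Nat.choose_two_right]

lemma cConst_nonneg : 0 ≤ cConst := tprod_nonneg fun _ ↦ by positivity

lemma cConst_le_half : cConst ≤ 1 / 2 := by
  have hmul := Real.multipliable_inv_one_add_of_summable summable_inv_three_pow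
    (fun k ↦ by positivity)
  calc cConst ≤ ∏ k ∈ range 1, (1 + ((3 : ℝ) ^ k)⁻¹)⁻¹ :=
        Real.tprod_le_prod_of_le_one hmul (fun k ↦ by positivity)
          (fun k ↦ inv_le_one_of_one_le₀ (le_add_of_nonneg_right (by positivity))) (range 1)
    _ = 1 / 2 := by norm_num

lemma prod_range_le_CConst (m : ℕ) :
    ∏ k ∈ range m, (1 - ((3 : ℝ) ^ (k + 1))⁻¹)⁻¹ ≤ CConst := by
  have hmul := Real.multipliable_inv_one_add_of_summable
    ((summable_nat_add_iff 1).2 summable_inv_three_pow).neg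
    (fun k ↦ by linarith [inv_lt_one_of_one_lt₀ (one_lt_three_pow_succ k)])
  simp only [← sub_eq_add_neg] at hmul
  exact Real.prod_le_tprod_of_one_le hmul one_le_inv_one_sub_inv_three_pow_succ _

lemma CConst_pos : 0 < CConst := zero_lt_one.trans_le (by simpa using prod_range_le_CConst 0)

lemma Eeven_nonneg (n : ℕ) : 0 ≤ Eeven n := by
  unfold Eeven
  split_ifs
  · exact mul_nonneg cConst_nonneg <| prod_nonneg fun k _ ↦
      div_nonneg (by norm_num) (sub_nonneg.2 (one_le_pow₀ (by norm_num)))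
  · exact le_rfl

lemma Eeven_two_mul_le (m : ℕ) : Eeven (2 * m) ≤ cConst * CConst * ((3 : ℝ) ^ m.choose 2)⁻¹ := by
  rw [Eeven, if_pos (even_two_mul m), Nat.mul_div_cancel_left m two_pos,
    prod_Icc_three_div_three_pow_sub_one]
  have := cConst_nonneg
  calc _ ≤ cConst * (((3 : ℝ) ^ m.choose 2)⁻¹ * CConst) := by gcongr; exact prod_range_le_CConst m
    _ = _ := by ring

lemma Eeven_add_two_mul_le {j : ℕ} (hj : 2 ≤ j) (n : ℕ) :
    Eeven (n + 2 * j) ≤ cConst * CConst * ((3 : ℝ) ^ j.choose 2)⁻¹ * 3⁻¹ ^ n := by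
  rcases Nat.even_or_odd n with ⟨i, rfl⟩ | hodd
  · calc Eeven (i + i + 2 * j) = Eeven (2 * (i + j)) := by congr 1; ring
      _ ≤ cConst * CConst * ((3 : ℝ) ^ (i + j).choose 2)⁻¹ := Eeven_two_mul_le _
      _ ≤ cConst * CConst * ((3 : ℝ) ^ (j.choose 2 + 2 * i))⁻¹ := by
        gcongr
        · exact mul_nonneg cConst_nonneg CConst_pos.le
        · norm_num
        · exact Nat.choose_two_add_two_mul_le_add_choose_two i hj
      _ = cConst * CConst * ((3 : ℝ) ^ j.choose 2)⁻¹ * 3⁻¹ ^ (i + i) := by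
        rw [pow_add, mul_inv, ← two_mul, pow_mul, inv_pow, pow_mul]
        ring
  · rw [Eeven, if_neg (Nat.not_even_iff_odd.2 (hodd.add_even (even_two_mul j)))]
    exact mul_nonneg (mul_nonneg (mul_nonneg cConst_nonneg CConst_pos.le)
      (by positivity)) (by positivity)

/-- For every even s ≥ 4, the tail of the even stationary distribution satisfies
∑_{s' ≥ s} E_even(s') < C · 3^{-s(s-2)/8}. -/
theorem Eeven_tail_bound (s : ℕ) (hs : Even s) (hs4 : 4 ≤ s) :
    (∑' s' : ℕ, if s ≤ s' then Eeven s' else 0) <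
      CConst * ((3 : ℝ) ^ (s * (s - 2) / 8))⁻¹ := by
  obtain ⟨j, rfl⟩ := hs.two_dvd
  set K := cConst * CConst * ((3 : ℝ) ^ j.choose 2)⁻¹
  have hbound := Eeven_add_two_mul_le (j := j) (by omega)
  have hgeom : Summable fun n : ℕ ↦ K * 3⁻¹ ^ n :=
    (summable_geometric_of_lt_one (by norm_num) (by norm_num)).mul_left K
  rw [tsum_ite_le_eq_tsum_add, two_mul_mul_two_mul_sub_two_div_eight]
  calc ∑' n, Eeven (n + 2 * j)
      ≤ ∑' n : ℕ, K * 3⁻¹ ^ n :=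
        (hgeom.of_nonneg_of_le (fun _ ↦ Eeven_nonneg _) hbound).tsum_le_tsum hbound hgeom
    _ = 3 / 2 * cConst * (CConst * ((3 : ℝ) ^ j.choose 2)⁻¹) := by
        rw [tsum_mul_left, tsum_geometric_of_lt_one (by norm_num) (by norm_num)]
        ring
    _ < CConst * ((3 : ℝ) ^ j.choose 2)⁻¹ := by
        have hpos : 0 < CConst * ((3 : ℝ) ^ j.choose 2)⁻¹ :=
          mul_pos CConst_pos (by positivity)
        nlinarith [cConst_le_half]
end

section
/- The distribution E_even, given by E_even(2j) = c·∏_{k=1}^{j} 3/(3^k−1) with c = ∏_{k=0}^∞(1+3^{-k})^{-1}, is stationary for the alternating mod-3 Lagrangian Markov operator M_L: for every even s ≥ 0, ∑_r m_{r,s}·E_even(r) = E_even(s), where m_{r,s} = 1 − 3^{−r/2} if s = r−2 ≥ 0 and r even, m_{r,s} = 3^{−r/2} if s = r+2 and r even, and 0 otherwise. -/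
open scoped BigOperators

/-- Transition coefficients of the (even-state) alternating mod-3 Lagrangian Markov
operator: for r even, m_{r,s} = 1 - 3^{-r/2} if s = r - 2 ≥ 0, m_{r,s} = 3^{-r/2}
if s = r + 2, and 0 otherwise. -/
noncomputable def mCoeff (r s : ℕ) : ℝ :=
  if Even r then
    if s + 2 = r then 1 - ((3 : ℝ) ^ (r / 2))⁻¹
    else if s = r + 2 then ((3 : ℝ) ^ (r / 2))⁻¹
    else 0
  else 0

/-!
The chain is a birth–death chain, so it suffices to check detailed balance
`E(2j) · 3^{-j} = E(2j+2) · (1 - 3^{-(j+1)})`, which is exactly the ratio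
`E(2j+2) / E(2j) = 3 / (3^{j+1} - 1)` built into the product formula. Summing the two
balanced flows into a state `s` then gives `E(s)` times the row sum of `s`, which is `1`.
-/

lemma Eeven_two_mul (j : ℕ) :
    Eeven (2 * j) = cConst * ∏ k ∈ Finset.Icc 1 j, 3 / ((3 : ℝ) ^ k - 1) := by
  simp [Eeven, Nat.mul_div_cancel_left j two_pos]

lemma Eeven_two_mul_add_two (j : ℕ) :
    Eeven (2 * j + 2) = Eeven (2 * j) * (3 / ((3 : ℝ) ^ (j + 1) - 1)) := by
  rw [show 2 * j + 2 = 2 * (j + 1) by ring, Eeven_two_mul, Eeven_two_mul,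
    Finset.prod_Icc_succ_top (Nat.le_add_left 1 j), mul_assoc]

lemma mCoeff_eq_zero {r s : ℕ} (h₁ : s + 2 ≠ r) (h₂ : s ≠ r + 2) : mCoeff r s = 0 := by
  simp [mCoeff, h₁, h₂]

lemma mCoeff_two_mul_up (j : ℕ) : mCoeff (2 * j) (2 * j + 2) = ((3 : ℝ) ^ j)⁻¹ := by
  rw [mCoeff, if_pos (even_two_mul j), if_neg (by omega), if_pos rfl,
    Nat.mul_div_cancel_left j two_pos]

lemma mCoeff_two_mul_down (j : ℕ) :
    mCoeff (2 * j + 2) (2 * j) = 1 - ((3 : ℝ) ^ (j + 1))⁻¹ := by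
  rw [show 2 * j + 2 = 2 * (j + 1) by ring, mCoeff, if_pos (even_two_mul (j + 1)),
    if_pos (by ring), Nat.mul_div_cancel_left (j + 1) two_pos]

lemma mCoeff_two_mul_down_add_up (j : ℕ) :
    mCoeff (2 * j + 2) (2 * j) + mCoeff (2 * j + 2) (2 * j + 2 + 2) = 1 := by
  rw [mCoeff_two_mul_down, show 2 * j + 2 = 2 * (j + 1) by ring, mCoeff_two_mul_up]
  ring

-- In `ℕ`, `s - 2` truncates to `0` for `s < 2`; this is harmless since `mCoeff 0 s = 0` there.
lemma tsum_mCoeff_mul (f : ℕ → ℝ) (s : ℕ) :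
    ∑' r, mCoeff r s * f r = mCoeff (s - 2) s * f (s - 2) + mCoeff (s + 2) s * f (s + 2) := by
  have hne : s - 2 ≠ s + 2 := by omega
  rw [tsum_eq_sum (s := {s - 2, s + 2}), Finset.sum_pair hne]
  intro r hr
  simp only [Finset.mem_insert, Finset.mem_singleton, not_or] at hr
  rw [mCoeff_eq_zero (by omega) (by omega), zero_mul]

lemma Eeven_detailed_balance (j : ℕ) :
    mCoeff (2 * j) (2 * j + 2) * Eeven (2 * j) =
      mCoeff (2 * j + 2) (2 * j) * Eeven (2 * j + 2) := by
  have h3 : (1 : ℝ) < 3 ^ (j + 1) := one_lt_pow₀ (by norm_num) j.succ_ne_zero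
  rw [mCoeff_two_mul_up, mCoeff_two_mul_down, Eeven_two_mul_add_two]
  field_simp [(sub_pos.mpr h3).ne']
  ring

/-- E_even is stationary for the alternating mod-3 Lagrangian Markov operator:
for every even s, ∑_r m_{r,s}·E_even(r) = E_even(s). -/
theorem Eeven_stationary (s : ℕ) (hs : Even s) :
    (∑' r : ℕ, mCoeff r s * Eeven r) = Eeven s := by
  obtain ⟨j, rfl⟩ := hs
  rw [← two_mul, tsum_mCoeff_mul]
  rcases j with _ | k
  · rw [mCoeff_eq_zero (by omega) (by omega), zero_mul, zero_add,
      ← Eeven_detailed_balance 0, mCoeff_two_mul_up, pow_zero, inv_one, one_mul]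
  · rw [show 2 * (k + 1) - 2 = 2 * k by omega, ← Eeven_detailed_balance (k + 1),
      show 2 * (k + 1) = 2 * k + 2 by ring, Eeven_detailed_balance k, ← add_mul,
      mCoeff_two_mul_down_add_up, one_mul]
end
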